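/- For every 3CM M with m states there exist natural numbers q_i, r_i for 1 ≤ i ≤ p such that gcd(q_i, r_i) = 1 and, for every configuration C of M, letting i = enc(C) mod p: if next(C) is defined, then r_i divides q_i · enc(C) and enc(next(C)) · r_i = q_i · enc(C); and if next(C) is undefined, then q_i · enc(C) = r_i · enc(C). -/

import Mathlib

set_option maxHeartbeats 1000000
set_option synthInstance.maxHeartbeats 1000000
set_option synthInstance.maxSize 512

attribute [local instance] Classical.propDecidable

noncomputable section

/-! ### Terms and atoms -/

/-- Variables: ordinary variables `Sum.inl n`, or fresh variables `Sum.inr (c, k)`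
introduced by the trigger with code `c` for the head variable with code `k`. -/
abbrev Var : Type := ℕ ⊕ (ℕ × ℕ)

/-- Terms: constants `Sum.inl c` or variables `Sum.inr v`. -/
abbrev FTerm : Type := ℕ ⊕ Var

def ct (n : ℕ) : FTerm := Sum.inl n
def vt (n : ℕ) : FTerm := Sum.inr (Sum.inl n)

/-- An atom: a predicate name together with its list of arguments. -/
abbrev Atom : Type := ℕ × List FTerm

/-- Active domain: all terms occurring in an atom set. -/
def adom (J : Set Atom) : Set FTerm := {t | ∃ a ∈ J, t ∈ a.2}

def atomVarsF (a : Atom) : Finset Var := (a.2.filterMap Sum.getRight?).toFinset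

def varsF (A : Finset Atom) : Finset Var := A.biUnion atomVarsF

def setVars (J : Set Atom) : Set Var := {v | ∃ a ∈ J, Sum.inr v ∈ a.2}

/-! ### Substitutions and homomorphisms -/

abbrev Subst := Var → FTerm

def applyT (σ : Subst) : FTerm → FTerm
  | Sum.inl c => Sum.inl c
  | Sum.inr v => σ v

def applyA (σ : Subst) (a : Atom) : Atom := (a.1, a.2.map (applyT σ))

def IsHomOn (σ : Subst) (A B : Set Atom) : Prop := ∀ a ∈ A, applyA σ a ∈ B

def HomBetween (A B : Set Atom) : Prop := ∃ σ : Subst, IsHomOn σ A B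

def IsRetraction (σ : Subst) (A B : Set Atom) : Prop :=
  IsHomOn σ A B ∧ ∀ v ∈ setVars A ∩ setVars B, σ v = Sum.inr v

/-- Isomorphism of atom sets: a pair of mutually inverse homomorphisms. -/
def Isomorphic (A B : Set Atom) : Prop :=
  ∃ σ τ : Subst, IsHomOn σ A B ∧ IsHomOn τ B A ∧
    (∀ a ∈ A, applyA τ (applyA σ a) = a) ∧ (∀ b ∈ B, applyA σ (applyA τ b) = b)

/-! ### Rules -/

/-- A rule is a pair (body, head). Its existential variables are the head variables
not occurring in the body; its frontier the variables shared by body and head.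
A rule is Datalog when every head variable occurs in the body. -/
abbrev Rule : Type := Finset Atom × Finset Atom

def frontierOf (R : Rule) : Finset Var := varsF R.1 ∩ varsF R.2

def DatRules (Rset : Finset Rule) : Finset Rule := Rset.filter fun R => varsF R.2 ⊆ varsF R.1
def NDatRules (Rset : Finset Rule) : Finset Rule := Rset.filter fun R => ¬ varsF R.2 ⊆ varsF R.1

/-- Satisfaction of a rule in an atom set. -/
def SatisfiesRule (J : Set Atom) (R : Rule) : Prop :=
  ∀ σ : Subst, IsHomOn σ (R.1 : Set Atom) J →
    ∃ σ' : Subst, (∀ v ∈ varsF R.1, σ' v = σ v) ∧ IsHomOn σ' (R.2 : Set Atom) J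

def IsModel (Rset : Finset Rule) (I J : Set Atom) : Prop :=
  (∀ R ∈ Rset, SatisfiesRule J R) ∧ HomBetween I J

/-- BCQ entailment: every model of the KB satisfies the query. -/
def Entails (Rset : Finset Rule) (I q : Set Atom) : Prop :=
  ∀ J : Set Atom, IsModel Rset I J → HomBetween q J

def IsUniversalModel (Rset : Finset Rule) (I U : Set Atom) : Prop :=
  IsModel Rset I U ∧ ∀ J : Set Atom, IsModel Rset I J → HomBetween U J

/-! ### Triggers -/

structure Trigger where
  rule : Rule
  sub : Subst

/-- Injective code of a trigger (a trigger is determined by its rule and the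
restriction of its substitution to the body variables). -/
def Trigger.code (t : Trigger) : ℕ :=
  Encodable.encode (t.rule, (varsF t.rule.1).image fun v => (v, t.sub v))

/-- The canonical extension of the trigger substitution, mapping each existential
variable `z` to the fresh variable unique for `z` and the trigger. -/
def Trigger.extSub (t : Trigger) : Subst := fun v =>
  if v ∈ varsF t.rule.1 then t.sub v
  else Sum.inr (Sum.inr (t.code, Encodable.encode v))

def Trigger.out (t : Trigger) : Finset Atom := t.rule.2.image (applyA t.extSub)

def Trigger.isOn (t : Trigger) (J : Set Atom) : Prop := IsHomOn t.sub (t.rule.1 : Set Atom) J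

/-! ### Chase variants, derivations, chase termination classes -/

inductive ChaseVariant : Type
  | O | SO | R | E
deriving DecidableEq

def Applicable : ChaseVariant → Trigger → Set Atom → Prop
  | .O, t, J => ¬ ((t.out : Set Atom) ⊆ J)
  | .SO, t, J => ∀ t' : Trigger, t'.rule = t.rule → t'.isOn J →
      (∀ v ∈ frontierOf t.rule, t'.sub v = t.sub v) → ¬ ((t'.out : Set Atom) ⊆ J)
  | .R, t, J => ¬ ∃ σ : Subst, IsRetraction σ (J ∪ (t.out : Set Atom)) J
  | .E, t, J => ¬ ∃ σ : Subst, IsHomOn σ (J ∪ (t.out : Set Atom)) J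

def instSeq (I : Set Atom) (steps : ℕ → Option Trigger) : ℕ → Set Atom
  | 0 => I
  | n + 1 => instSeq I steps n ∪
      (match steps n with
        | none => (∅ : Set Atom)
        | some t => (t.out : Set Atom))

/-- A (possibly infinite) derivation from the knowledge base `⟨Rset, I⟩`. -/
structure Deriv (Rset : Finset Rule) (I : Set Atom) where
  steps : ℕ → Option Trigger
  prefix_closed : ∀ n, steps n = none → steps (n + 1) = none
  valid : ∀ n t, steps n = some t →
    t.rule ∈ Rset ∧ t.isOn (instSeq I steps n) ∧ ¬ ((t.out : Set Atom) ⊆ instSeq I steps n)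

def Deriv.inst {Rset : Finset Rule} {I : Set Atom} (D : Deriv Rset I) (n : ℕ) :
    Set Atom := instSeq I D.steps n

def Deriv.res {Rset : Finset Rule} {I : Set Atom} (D : Deriv Rset I) : Set Atom :=
  ⋃ n, D.inst n

def Deriv.Finite {Rset : Finset Rule} {I : Set Atom} (D : Deriv Rset I) : Prop :=
  ∃ n, D.steps n = none

def Deriv.IsX {Rset : Finset Rule} {I : Set Atom} (X : ChaseVariant)
    (D : Deriv Rset I) : Prop :=
  ∀ n t, D.steps n = some t → Applicable X t (D.inst n)

def Deriv.Fair {Rset : Finset Rule} {I : Set Atom} (X : ChaseVariant)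
    (D : Deriv Rset I) : Prop :=
  ∀ i, ∀ t : Trigger, t.rule ∈ Rset → t.isOn (D.inst i) → Applicable X t (D.inst i) →
    ∃ j, i < j ∧ ¬ Applicable X t (D.inst j)

/-- All-instance, all-derivation chase termination. -/
def CTall (X : ChaseVariant) (Rset : Finset Rule) : Prop :=
  ∀ I : Finset Atom, ∀ D : Deriv Rset (I : Set Atom), D.IsX X → D.Fair X → D.Finite

/-- All-instance, some-derivation chase termination. -/
def CTex (X : ChaseVariant) (Rset : Finset Rule) : Prop :=
  ∀ I : Finset Atom, ∃ D : Deriv Rset (I : Set Atom), D.IsX X ∧ D.Fair X ∧ D.Finite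

inductive CTQuant : Type
  | all | ex

def CT (X : ChaseVariant) : CTQuant → Finset Rule → Prop
  | .all => CTall X
  | .ex => CTex X

/-- The result of some fair `X`-derivation from `⟨Rset, J⟩`. -/
def ChX (X : ChaseVariant) (Rset : Finset Rule) (J : Set Atom) : Set Atom :=
  if h : ∃ D : Deriv Rset J, D.IsX X ∧ D.Fair X then h.choose.res else J

/-! ### Gaifman graph, treewidth, bts -/

def gaifmanAdj (J : Set Atom) (u v : FTerm) : Prop :=
  u ≠ v ∧ ∃ a ∈ J, u ∈ a.2 ∧ v ∈ a.2

/-- The (Gaifman graph of the) atom set `J` has treewidth at most `k`: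
there is a tree decomposition all of whose bags have size at most `k + 1`. -/
def TreewidthAtMost (J : Set Atom) (k : ℕ) : Prop :=
  ∃ (ι : Type) (T : SimpleGraph ι) (bag : ι → Finset FTerm),
    T.Connected ∧ T.IsAcyclic ∧
    (∀ v ∈ adom J, ∃ i, v ∈ bag i) ∧
    (∀ u v : FTerm, gaifmanAdj J u v → ∃ i, u ∈ bag i ∧ v ∈ bag i) ∧
    (∀ v : FTerm, (SimpleGraph.induce {i | v ∈ bag i} T).Preconnected) ∧
    (∀ i, (bag i).card ≤ k + 1)

/-- Bounded-treewidth sets: for every instance, some universal model of bounded treewidth. -/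
def IsBts (Rset : Finset Rule) : Prop :=
  ∀ I : Finset Atom, ∃ (k : ℕ) (U : Set Atom),
    IsUniversalModel Rset (I : Set Atom) U ∧ TreewidthAtMost U k

/-! ### Three-counter machines -/

/-- A three-counter machine: states `0, …, m − 1` (state `0` is initial, standing for `q₁`),
and a partial transition function given by a finite table. -/
structure TCM where
  m : ℕ
  hm : 0 < m
  δ : List ((ℕ × Bool × Bool) × (ℕ × Int × Int))
  keys_nodup : (δ.map Prod.fst).Nodup
  wf : ∀ e ∈ δ, e.1.1 < m ∧ e.2.1 < m ∧ e.2.2.1.natAbs ≤ 1 ∧ e.2.2.2.natAbs ≤ 1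

/-- A configuration: state, two counters, and the time counter. -/
abbrev Config : Type := ℕ × ℕ × ℕ × ℕ

def TCM.step (M : TCM) (q : ℕ) (b1 b2 : Bool) : Option (ℕ × Int × Int) :=
  (M.δ.find? fun e => decide (e.1 = (q, b1, b2))).map Prod.snd

def TCM.next (M : TCM) (C : Config) : Option Config :=
  match M.step C.1 (decide (C.2.1 ≠ 0)) (decide (C.2.2.1 ≠ 0)) with
  | none => none
  | some (q', d1, d2) =>
      some (q', ((C.2.1 : ℤ) + d1).toNat, ((C.2.2.1 : ℤ) + d2).toNat, C.2.2.2 + 1)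

def TCM.run (M : TCM) : ℕ → Option Config
  | 0 => some (0, 0, 0, 0)
  | n + 1 => (M.run n).bind M.next

/-- The machine halts: some reachable configuration has no successor. -/
def TCM.Halts (M : TCM) : Prop := ∃ n C, M.run n = some C ∧ M.next C = none

/-! ### Prime encoding of configurations -/

/-- The least prime strictly greater than `n` (computably). -/
def nextPrime (n : ℕ) : ℕ := Nat.find (Nat.exists_infinite_primes (n + 1))

/-- `prm i` is the `(i+1)`-st prime `p_{i+1}`, i.e. `prm 0 = 2`. -/
def prm : ℕ → ℕ
  | 0 => 2
  | k + 1 => nextPrime (prm k)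

/-- Encoding of a configuration as a natural number. -/
def TCM.enc (M : TCM) (C : Config) : ℕ :=
  prm C.1 * prm M.m ^ C.2.1 * prm (M.m + 1) ^ C.2.2.1 * prm (M.m + 2) ^ C.2.2.2

/-- `p = p₁ ⋯ p_{m+3}`. -/
def TCM.p (M : TCM) : ℕ := ∏ i ∈ Finset.range (M.m + 3), prm i

/-- Decode the state from a residue modulo `M.p`. -/
def TCM.stateOf (M : TCM) (i : ℕ) : Option ℕ :=
  (List.range M.m).find? fun s => decide (prm s ∣ i)

/-- The canonical pair `(q_i, r_i)` realizing the prime encoding of the transitions. -/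
def TCM.qr (M : TCM) (i : ℕ) : ℕ × ℕ :=
  match M.stateOf i with
  | none => (1, 1)
  | some s =>
      let b1 : Bool := decide (prm M.m ∣ i)
      let b2 : Bool := decide (prm (M.m + 1) ∣ i)
      match M.step s b1 b2 with
      | none => (1, 1)
      | some (s', d1, d2) =>
          let e1 : ℤ := if b1 then d1 else max d1 0
          let e2 : ℤ := if b2 then d2 else max d2 0
          let num : ℕ := prm s' * prm (M.m + 2) *
            (if e1 = 1 then prm M.m else 1) * (if e2 = 1 then prm (M.m + 1) else 1)
          let den : ℕ := prm s *
            (if e1 = -1 then prm M.m else 1) * (if e2 = -1 then prm (M.m + 1) else 1)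
          (num / Nat.gcd num den, den / Nat.gcd num den)

def TCM.qi (M : TCM) (i : ℕ) : ℕ := (M.qr i).1
def TCM.ri (M : TCM) (i : ℕ) : ℕ := (M.qr i).2

/-- `g(n) = q_{n mod p} · n / r_{n mod p}`. -/
def TCM.g (M : TCM) (n : ℕ) : ℕ := M.qi (n % M.p) * n / M.ri (n % M.p)

/-- `gᵏ(2)`. -/
def TCM.gIter (M : TCM) (k : ℕ) : ℕ := (M.g)^[k] 2

/-- `G = {gᵏ(2) : k ∈ ℕ}`. -/
def TCM.Gset (M : TCM) : Set ℕ := Set.range M.gIter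

/-! ### The rule set `R_M` -/

def pEnd : ℕ := 0
def pFlood : ℕ := 1
def pS0 : ℕ := 2
def pS : ℕ := 3
def pG : ℕ := 4
def pR (i : ℕ) : ℕ := 5 + 2 * i
def pT (i : ℕ) : ℕ := 6 + 2 * i

/-- `j`-th vertex of an `S`-path of length `n` from variable `a` to variable `b`
with fresh intermediate variables `base + 1, …, base + n − 1`. -/
def pathVar (a b base n j : ℕ) : FTerm :=
  if j = 0 then vt a else if j = n then vt b else vt (base + j)

/-- The atoms of `Sⁿ(x_a, x_b)`: an `S`-path of length `n`. -/
def spath (a b base n : ℕ) : Finset Atom :=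
  (Finset.range n).image fun j =>
    (pS, [pathVar a b base n j, pathVar a b base n (j + 1)])

/-- Rule (1): `S₀(x,y) → S(x,y)`. -/
def ruleS : Rule := ({(pS0, [vt 0, vt 1])}, {(pS, [vt 0, vt 1])})

/-- Rule (2): `R_i(x,y) ∧ S(y,z) → R_{i+1}(x,z)` (indices modulo `p`). -/
def ruleR (M : TCM) (i : ℕ) : Rule :=
  ({(pR i, [vt 0, vt 1]), (pS, [vt 1, vt 2])}, {(pR ((i + 1) % M.p), [vt 0, vt 2])})

/-- Rule (3): `T_i(x,y,z) ∧ S^{r_i}(y,y′) ∧ S^{q_i}(z,z′) → T_i(x,y′,z′)`. -/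
def ruleT (M : TCM) (i : ℕ) : Rule :=
  (({(pT i, [vt 0, vt 1, vt 2])} : Finset Atom) ∪ spath 1 3 10 (M.ri i) ∪
      spath 2 4 (11 + M.ri i) (M.qi i),
    {(pT i, [vt 0, vt 3, vt 4])})

/-- Rule (4): `S(x,y) → Flood(y)`. -/
def ruleFloodProp : Rule := ({(pS, [vt 0, vt 1])}, {(pFlood, [vt 1])})

/-- Rule (5): `End(x) → S(x,x)`. -/
def ruleSEnd : Rule := ({(pEnd, [vt 0])}, {(pS, [vt 0, vt 0])})

/-- Rule (6): `S²(x,y) → G(x,y)`. -/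
def ruleGInit : Rule := (spath 0 1 10 2, {(pG, [vt 0, vt 1])})

/-- Rule (7): `G(x,y) ∧ R_i(x,y) ∧ T_i(x,y,z) → G(x,z)`. -/
def ruleGStep (i : ℕ) : Rule :=
  ({(pG, [vt 0, vt 1]), (pR i, [vt 0, vt 1]), (pT i, [vt 0, vt 1, vt 2])},
    {(pG, [vt 0, vt 2])})

/-- Rule (8): `Flood(x) ∧ Flood(y) ∧ Flood(z) → G(x,y) ∧ ⋀_{j<p} (R_j(x,y) ∧ T_j(x,y,z))`. -/
def ruleFloodGen (M : TCM) : Rule :=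
  ({(pFlood, [vt 0]), (pFlood, [vt 1]), (pFlood, [vt 2])},
    ({(pG, [vt 0, vt 1])} : Finset Atom) ∪
      (Finset.range M.p).biUnion fun j =>
        {(pR j, [vt 0, vt 1]), (pT j, [vt 0, vt 1, vt 2])})

/-- Rule (9): `G(y,z) ∧ End(z) → ∃x (S₀(x,y) ∧ R₀(x,x) ∧ ⋀_{j<p} T_j(x,x,x))`. -/
def ruleEx (M : TCM) : Rule :=
  ({(pG, [vt 1, vt 2]), (pEnd, [vt 2])},
    ({(pS0, [vt 0, vt 1]), (pR 0, [vt 0, vt 0])} : Finset Atom) ∪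
      (Finset.range M.p).biUnion fun j => {(pT j, [vt 0, vt 0, vt 0])})

/-- The rule set `R_M`. -/
def RM (M : TCM) : Finset Rule :=
  ({ruleS, ruleFloodProp, ruleSEnd, ruleGInit, ruleFloodGen M, ruleEx M} : Finset Rule) ∪
    (Finset.range M.p).biUnion fun i => {ruleR M i, ruleT M i, ruleGStep i}

/-- The alternating Datalog/non-Datalog chase steps `Step^X_n`. -/
def StepX (X : ChaseVariant) (M : TCM) : ℕ → Set Atom → Set Atom
  | 0, I => ChX X (DatRules (RM M)) I
  | n + 1, I => ChX X (DatRules (RM M)) (ChX X (NDatRules (RM M)) (StepX X M n I))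

/-- The constant `w`, the "well of positivity". -/
def wC : FTerm := ct 0

/-- The instance `{End(w)}`. -/
def IE : Set Atom := {(pEnd, [wC])}

/-- Membership in the signature of `R_M` (predicate together with its arity). -/
def InSig (M : TCM) (a : Atom) : Prop :=
  ((a.1 = pEnd ∨ a.1 = pFlood) ∧ a.2.length = 1) ∨
  ((a.1 = pS0 ∨ a.1 = pS ∨ a.1 = pG ∨ ∃ i < M.p, a.1 = pR i) ∧ a.2.length = 2) ∨
  ((∃ i < M.p, a.1 = pT i) ∧ a.2.length = 3)

/-- The critical instance: all atoms `P(w, …, w)` over the signature of `R_M`. -/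
def Crit (M : TCM) : Set Atom := {a | InSig M a ∧ ∀ t ∈ a.2, t = wC}

/-- An `S`-path of length `k` from `s` to `t` in `J`. -/
def SPath (J : Set Atom) : ℕ → FTerm → FTerm → Prop
  | 0, s, t => s = t
  | k + 1, s, t => ∃ u, (pS, [s, u]) ∈ J ∧ SPath J k u t

/-- The restriction `J|_S`: atoms of `J` all of whose terms belong to `S`. -/
def restrictTo (J : Set Atom) (S : Set FTerm) : Set Atom := {a ∈ J | ∀ t ∈ a.2, t ∈ S}

/-- An explicit injective encoding of three-counter machines by natural numbers. -/
def encodeTCM (M : TCM) : ℕ := Encodable.encode (M.m, M.δ)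

/-!
The residue `i = enc C % p` determines everything the transition of `C` depends on: the state is
the unique `q_s` with `p_s ∣ i`, and counter `j` is nonzero iff `p_{m+j} ∣ i`, because all these
primes divide `p`. So the transition taken is a function of `i`, and it multiplies `enc C` by the
fraction `p_{s'} p_{m+3} ∏ p_{m+j}^[e_j = 1] / (p_s ∏ p_{m+j}^[e_j = -1])`, where `e_j` is the
effective change of counter `j` after truncation at `0`. The pair `M.qr i` is that fraction in
lowest terms; when no transition applies it is `(1, 1)`.
-/

lemma nextPrime_spec (n : ℕ) : n < nextPrime n ∧ (nextPrime n).Prime :=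
  Nat.find_spec (Nat.exists_infinite_primes (n + 1))

lemma prm_prime (k : ℕ) : (prm k).Prime := by
  cases k with
  | zero => exact Nat.prime_two
  | succ k => exact (nextPrime_spec (prm k)).2

lemma prm_strictMono : StrictMono prm :=
  strictMono_nat_of_lt_succ fun k => (nextPrime_spec (prm k)).1

lemma prm_dvd_prm_iff {k j : ℕ} : prm k ∣ prm j ↔ k = j := by
  rw [Nat.prime_dvd_prime_iff_eq (prm_prime k) (prm_prime j), prm_strictMono.injective.eq_iff]

lemma prm_dvd_prm_pow_iff {k j v : ℕ} : prm k ∣ prm j ^ v ↔ k = j ∧ v ≠ 0 := by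
  rcases Nat.eq_zero_or_pos v with rfl | hv
  · simp [(prm_prime k).one_lt.ne']
  · rw [(prm_prime k).prime.dvd_pow_iff_dvd hv.ne', prm_dvd_prm_iff]
    exact (and_iff_left hv.ne').symm

lemma Nat.mul_div_gcd_eq_div_gcd_mul {a b x y : ℕ} (h : x * b = a * y) :
    x * (b / a.gcd b) = a / a.gcd b * y := by
  rcases Nat.eq_zero_or_pos (a.gcd b) with hg | hg
  · simp [Nat.gcd_eq_zero_iff.1 hg]
  · apply Nat.eq_of_mul_eq_mul_right hg
    rw [mul_assoc, Nat.div_mul_cancel (a.gcd_dvd_right b), mul_right_comm,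
      Nat.div_mul_cancel (a.gcd_dvd_left b), h]

-- `if v ≠ 0 then d else max d 0` is the actual change of `v` under the update `max (v + d) 0`.
lemma pow_toNat_add_mul_ite (P v : ℕ) {d : ℤ} (hd : d.natAbs ≤ 1) :
    P ^ ((v : ℤ) + d).toNat * (if (if v ≠ 0 then d else max d 0) = -1 then P else 1)
      = P ^ v * (if (if v ≠ 0 then d else max d 0) = 1 then P else 1) := by
  obtain rfl | rfl | rfl : d = -1 ∨ d = 0 ∨ d = 1 := by omega
  · rcases v with _ | v <;> simp [pow_succ]
  · simp
  · rw [show ((v : ℤ) + 1).toNat = v + 1 by omega]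
    rcases v with _ | v <;> simp [pow_succ]

namespace TCM

variable (M : TCM)

lemma prm_dvd_enc_iff (C : Config) (k : ℕ) :
    prm k ∣ M.enc C ↔ k = C.1 ∨ (k = M.m ∧ C.2.1 ≠ 0) ∨ (k = M.m + 1 ∧ C.2.2.1 ≠ 0) ∨
      (k = M.m + 2 ∧ C.2.2.2 ≠ 0) := by
  have hp := (prm_prime k).prime
  rw [TCM.enc, hp.dvd_mul, hp.dvd_mul, hp.dvd_mul, prm_dvd_prm_iff,
    prm_dvd_prm_pow_iff, prm_dvd_prm_pow_iff, prm_dvd_prm_pow_iff]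
  tauto

lemma prm_dvd_enc_mod_p_iff (C : Config) {k : ℕ} (hk : k < M.m + 3) :
    prm k ∣ M.enc C % M.p ↔ prm k ∣ M.enc C :=
  Nat.dvd_mod_iff (Finset.dvd_prod_of_mem _ (Finset.mem_range.2 hk))

lemma stateOf_enc_mod_p {C : Config} (hC : C.1 < M.m) :
    M.stateOf (M.enc C % M.p) = some C.1 := by
  have hstate : ∀ s < M.m, prm s ∣ M.enc C % M.p ↔ s = C.1 := fun s hs => by
    rw [prm_dvd_enc_mod_p_iff M C (by omega), prm_dvd_enc_iff]
    omega
  rw [TCM.stateOf, List.find?_range_eq_some]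
  refine ⟨by simp [hstate _ hC], List.mem_range.2 hC, fun j hj => ?_⟩
  simp only [hstate j (hj.trans hC), Bool.not_eq_true', decide_eq_false_iff_not]
  omega

lemma decide_prm_m_dvd_enc_mod_p {C : Config} (hC : C.1 < M.m) :
    decide (prm M.m ∣ M.enc C % M.p) = decide (C.2.1 ≠ 0) := by
  rw [decide_eq_decide, prm_dvd_enc_mod_p_iff M C (by omega), prm_dvd_enc_iff]
  omega

lemma decide_prm_m_add_one_dvd_enc_mod_p {C : Config} (hC : C.1 < M.m) :
    decide (prm (M.m + 1) ∣ M.enc C % M.p) = decide (C.2.2.1 ≠ 0) := by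
  rw [decide_eq_decide, prm_dvd_enc_mod_p_iff M C (by omega), prm_dvd_enc_iff]
  omega

lemma mem_δ_of_step_eq_some {q : ℕ} {b1 b2 : Bool} {r : ℕ × ℤ × ℤ}
    (h : M.step q b1 b2 = some r) : ((q, b1, b2), r) ∈ M.δ := by
  obtain ⟨e, he, rfl⟩ := Option.map_eq_some_iff.1 h
  have hkey : e.1 = (q, b1, b2) := by simpa using List.find?_some he
  exact hkey ▸ List.mem_of_find?_eq_some he

lemma qr_coprime (i : ℕ) : (M.qr i).1.Coprime (M.qr i).2 := by
  unfold TCM.qr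
  split
  · exact Nat.coprime_one_left 1
  dsimp only
  split
  · exact Nat.coprime_one_left 1
  · apply Nat.coprime_div_gcd_div_gcd
    apply Nat.gcd_pos_of_pos_left
    split_ifs <;> simp [Nat.pos_iff_ne_zero, (prm_prime _).ne_zero]

lemma qr_enc_mod_p_of_next_eq_none {C : Config} (hC : C.1 < M.m) (h : M.next C = none) :
    M.qr (M.enc C % M.p) = (1, 1) := by
  unfold TCM.next at h
  split at h
  · rename_i hstep
    simp only [TCM.qr, stateOf_enc_mod_p M hC, decide_prm_m_dvd_enc_mod_p M hC,
      decide_prm_m_add_one_dvd_enc_mod_p M hC, hstep]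
  · cases h

lemma enc_next_mul_qr_enc_mod_p {C C' : Config} (hC : C.1 < M.m) (h : M.next C = some C') :
    M.enc C' * (M.qr (M.enc C % M.p)).2 = (M.qr (M.enc C % M.p)).1 * M.enc C := by
  obtain ⟨s, v1, v2, t⟩ := C
  unfold TCM.next at h
  split at h
  · cases h
  rename_i s' d1 d2 hstep
  cases h
  obtain ⟨-, -, hd1, hd2⟩ := M.wf _ (mem_δ_of_step_eq_some M hstep)
  simp only [TCM.qr, stateOf_enc_mod_p M hC, decide_prm_m_dvd_enc_mod_p M hC,
    decide_prm_m_add_one_dvd_enc_mod_p M hC, hstep, decide_eq_true_eq]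
  apply Nat.mul_div_gcd_eq_div_gcd_mul
  dsimp only at hd1 hd2
  have hv1 := pow_toNat_add_mul_ite (prm M.m) v1 hd1
  have hv2 := pow_toNat_add_mul_ite (prm (M.m + 1)) v2 hd2
  rw [TCM.enc, TCM.enc]
  dsimp only
  linear_combination prm s' * prm s * prm (M.m + 2) ^ (t + 1) * congr($hv1 * $hv2)

end TCM

/-- existence of the numbers `q_i, r_i` realizing the prime encoding of
the transition function of a 3CM. -/
theorem stmt_0 (M : TCM) :
    ∃ q r : ℕ → ℕ,
      (∀ i, 1 ≤ i → i ≤ M.p → Nat.gcd (q i) (r i) = 1) ∧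
      (∀ C : Config, C.1 < M.m →
        (∀ C', M.next C = some C' →
            r (M.enc C % M.p) ∣ q (M.enc C % M.p) * M.enc C ∧
            M.enc C' * r (M.enc C % M.p) = q (M.enc C % M.p) * M.enc C) ∧
        (M.next C = none →
            q (M.enc C % M.p) * M.enc C = r (M.enc C % M.p) * M.enc C)) := by
  refine ⟨fun i => (M.qr i).1, fun i => (M.qr i).2, fun i _ _ => M.qr_coprime i,
    fun C hC => ⟨fun C' hC' => ?_, fun h => ?_⟩⟩
  · have h := M.enc_next_mul_qr_enc_mod_p hC hC'
    exact ⟨h ▸ dvd_mul_left _ _, h⟩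
  · simp [M.qr_enc_mod_p_of_next_eq_none hC h]

end
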